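/- Let F be a Schwartz function on ℍⁿ × ℝ and L a positive integer. There is a constant C, depending only on L, n and finitely many Schwartz seminorms of F, such that whenever |(z',u')| ≤ (1/(2γ))(1+|(z,u)|) and |r'| ≥ (1/2)(1+|r|), one has |F((z,u)∘(z',u')⁻¹, r−r') − F((z,u), r−r') − F((z,u)∘(z',u')⁻¹, r) + F((z,u), r)| ≤ C |(z',u')| (1+|(z,u)|)^{−(L+2n+2)} · [(1+|r−r'|)^{−(L+1)} + (1+|r|)^{−(L+1)}]. -/

import Mathlib

open MeasureTheory Complex SchwartzMap Filter
open scoped BigOperators ComplexConjugate FourierTransform ENNReal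

noncomputable section

/-- The underlying space of the Heisenberg group ℍⁿ ≅ ℂⁿ × ℝ. -/
abbrev H (n : ℕ) := (Fin n → ℂ) × ℝ

/-- Heisenberg group multiplication: (z,t)∘(z',t') = (z+z', t+t'+2 Im(z·conj z')). -/
def Hmul {n : ℕ} (x y : H n) : H n :=
  (x.1 + y.1, x.2 + y.2 + 2 * (∑ j, x.1 j * conj (y.1 j)).im)

/-- Heisenberg group inverse: (z,t)⁻¹ = (-z,-t). -/
def Hinv {n : ℕ} (x : H n) : H n := (-x.1, -x.2)

/-- Homogeneous norm |(z,t)| = (|z|² + |t|)^{1/2}. -/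
def Hnorm {n : ℕ} (x : H n) : ℝ := Real.sqrt ((∑ j, Complex.normSq (x.1 j)) + |x.2|)

/-- Convolution on ℍⁿ : (f∗g)(x) = ∫ f(x∘y⁻¹) g(y) dy. -/
def Hconv {n : ℕ} (f g : H n → ℝ) (x : H n) : ℝ := ∫ y, f (Hmul x (Hinv y)) * g y

/-- Partial convolution in the central variable: (f ∗₂ h)(z,u) = ∫ f(z,u−v) h(v) dv. -/
def conv2 {n : ℕ} (f : H n → ℝ) (h : ℝ → ℝ) (x : H n) : ℝ := ∫ v, f (x.1, x.2 - v) * h v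

/-- Ordinary convolution on ℝ. -/
def convR (h k : ℝ → ℝ) (x : ℝ) : ℝ := ∫ v, h (x - v) * k v

/-- Convolution on the direct product group ℍⁿ × ℝ. -/
def PConv {n : ℕ} (F G : H n × ℝ → ℝ) (p : H n × ℝ) : ℝ :=
  ∫ q : H n × ℝ, F (Hmul p.1 (Hinv q.1), p.2 - q.2) * G q

/-- The projection π : (πF)(z,u) = ∫ F((z,u−v),v) dv. -/
def piProj {n : ℕ} (F : H n × ℝ → ℝ) (x : H n) : ℝ := ∫ v, F ((x.1, x.2 - v), v)

/-- Nonisotropic dilation ψ_s(z,u) = s^{−2n−2} ψ(z/s, u/s²). -/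
def dil1 {n : ℕ} (ψ : H n → ℝ) (s : ℝ) (x : H n) : ℝ :=
  (s ^ (2 * n + 2))⁻¹ * ψ ((s : ℂ)⁻¹ • x.1, x.2 / s ^ 2)

/-- Dilation on ℝ: η_t(v) = t⁻¹ η(v/t). -/
def dil2 (η : ℝ → ℝ) (t : ℝ) (v : ℝ) : ℝ := t⁻¹ * η (v / t)

/-- All moments of a function on ℝ vanish. -/
def momentsVanishR (η : ℝ → ℝ) : Prop := ∀ γ : ℕ, ∫ v : ℝ, v ^ γ * η v = 0

/-- All moments of a function on ℍⁿ vanish. -/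
def momentsVanishH {n : ℕ} (ψ : H n → ℝ) : Prop :=
  ∀ (α β : Fin n → ℕ) (γ : ℕ),
    ∫ x : H n, (∏ j, ((x.1 j).re ^ α j * (x.1 j).im ^ β j)) * x.2 ^ γ * ψ x = 0

/-- A function on ℍⁿ is radial in the ℂⁿ-variable. -/
def HRadial {n : ℕ} (ψ : H n → ℝ) : Prop :=
  ∀ (z z' : Fin n → ℂ) (u : ℝ),
    (∑ j, Complex.normSq (z j)) = (∑ j, Complex.normSq (z' j)) → ψ (z, u) = ψ (z', u)

/-- The product moment conditions defining S_∞(ℍⁿ × ℝ). -/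
def SInf {n : ℕ} (F : H n × ℝ → ℝ) : Prop :=
  (∀ (α β : Fin n → ℕ) (γ : ℕ) (v : ℝ),
    ∫ x : H n, (∏ j, ((x.1 j).re ^ α j * (x.1 j).im ^ β j)) * x.2 ^ γ * F (x, v) = 0) ∧
  (∀ (γ : ℕ) (x : H n), ∫ v : ℝ, v ^ γ * F (x, v) = 0)

/-- The flag component function ψ_{s,t} = ψ^{(1)}_s ∗₂ ψ^{(2)}_t. -/
def psist {n : ℕ} (ψa : H n → ℝ) (ψb : ℝ → ℝ) (s t : ℝ) : H n → ℝ :=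
  conv2 (dil1 ψa s) (dil2 ψb t)

/-- The product kernel Ψ_{s,t}((z,u),r) = ψ^{(1)}_s(z,u) ψ^{(2)}_t(r) on ℍⁿ × ℝ. -/
def PsiST {n : ℕ} (ψa : H n → ℝ) (ψb : ℝ → ℝ) (s t : ℝ) : H n × ℝ → ℝ :=
  fun p => dil1 ψa s p.1 * dil2 ψb t p.2


/-!
The second difference is at most the sum of the first differences `F(x ∘ x'⁻¹, s) - F(x, s)` at
`s = r - r'` and `s = r`, and these decay in `x` and `s` at any prescribed rate. Indeed
`y ↦ x ∘ y⁻¹` is affine, so the Euclidean segment from `x` to `x ∘ x'⁻¹` consists of the points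
`x ∘ (θ x')⁻¹`, `0 ≤ θ ≤ 1`. Since `|x'| ≤ (1 + |x|) / (2γ)`, the quasi-triangle inequality gives
`1 + |x| ≤ 2γ (1 + |x ∘ (θ x')⁻¹|)` along it, and the segment has length `O(|x'| (1 + |x|))`;
the mean value theorem and the rapid decay of `DF` then give the bound.
-/

open scoped InnerProductSpace

section

variable {n : ℕ}

lemma Hnorm_nonneg (x : H n) : 0 ≤ Hnorm x := Real.sqrt_nonneg _

lemma sum_normSq_eq_norm_sq (z : Fin n → ℂ) :
    ∑ j, Complex.normSq (z j) = ‖(WithLp.toLp 2 z : EuclideanSpace ℂ (Fin n))‖ ^ 2 := by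
  simp [EuclideanSpace.norm_sq_eq, Complex.sq_norm]

lemma Hnorm_sq (x : H n) :
    Hnorm x ^ 2 = ‖(WithLp.toLp 2 x.1 : EuclideanSpace ℂ (Fin n))‖ ^ 2 + |x.2| := by
  rw [Hnorm, Real.sq_sqrt (add_nonneg (Finset.sum_nonneg fun j _ => Complex.normSq_nonneg _)
    (abs_nonneg _)), sum_normSq_eq_norm_sq]

lemma norm_toLp_fst_le_Hnorm (x : H n) :
    ‖(WithLp.toLp 2 x.1 : EuclideanSpace ℂ (Fin n))‖ ≤ Hnorm x := by
  refine le_of_sq_le_sq ?_ (Hnorm_nonneg x)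
  rw [Hnorm_sq]
  linarith [abs_nonneg x.2]

lemma norm_fst_le_Hnorm (x : H n) : ‖x.1‖ ≤ Hnorm x :=
  (pi_norm_le_iff_of_nonneg (Hnorm_nonneg x)).2 fun j =>
    (PiLp.norm_apply_le (WithLp.toLp 2 x.1 : EuclideanSpace ℂ (Fin n)) j).trans
      (norm_toLp_fst_le_Hnorm x)

lemma abs_snd_le_Hnorm_sq (x : H n) : |x.2| ≤ Hnorm x ^ 2 := by
  rw [Hnorm_sq]
  linarith [sq_nonneg ‖(WithLp.toLp 2 x.1 : EuclideanSpace ℂ (Fin n))‖]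

lemma abs_im_sum_mul_conj_le (x y : H n) :
    |(∑ j, x.1 j * conj (y.1 j)).im| ≤ Hnorm x * Hnorm y := by
  have h : ∑ j, x.1 j * conj (y.1 j) = ⟪(WithLp.toLp 2 y.1 : EuclideanSpace ℂ (Fin n)),
      WithLp.toLp 2 x.1⟫_ℂ := by
    simp [EuclideanSpace.inner_toLp_toLp, dotProduct]
  calc _ ≤ ‖⟪(WithLp.toLp 2 y.1 : EuclideanSpace ℂ (Fin n)), WithLp.toLp 2 x.1⟫_ℂ‖ :=
        h ▸ Complex.abs_im_le_norm _
    _ ≤ _ := norm_inner_le_norm _ _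
    _ ≤ Hnorm y * Hnorm x :=
        mul_le_mul (norm_toLp_fst_le_Hnorm y) (norm_toLp_fst_le_Hnorm x) (norm_nonneg _)
          (Hnorm_nonneg y)
    _ = _ := mul_comm _ _

lemma one_add_Hnorm_le (y : H n) : 1 + Hnorm y ≤ (1 + √(n + 1)) * (1 + ‖y‖) := by
  have hfst : ∑ j, Complex.normSq (y.1 j) ≤ n * ‖y‖ ^ 2 := by
    calc ∑ j, Complex.normSq (y.1 j) ≤ ∑ _j : Fin n, ‖y‖ ^ 2 := by
          gcongr with j
          rw [Complex.normSq_eq_norm_sq]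
          gcongr
          exact (norm_le_pi_norm y.1 j).trans (norm_fst_le y)
      _ = n * ‖y‖ ^ 2 := by simp
  have hsnd : |y.2| ≤ ‖y‖ := norm_snd_le y
  have hy : Hnorm y ≤ √(n + 1) * (1 + ‖y‖) := by
    rw [Hnorm, ← Real.sqrt_sq (by positivity : 0 ≤ 1 + ‖y‖), ← Real.sqrt_mul (by positivity)]
    gcongr
    nlinarith [norm_nonneg y]
  nlinarith [norm_nonneg y]

lemma Hmul_Hinv_mul (x y : H n) : Hmul (Hmul x (Hinv y)) y = x := by
  have h : (∑ j, y.1 j * conj (y.1 j)).im = 0 := by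
    simp [Complex.mul_conj]
  ext1
  · simp [Hmul, Hinv]
  · simp [Hmul, Hinv, add_mul, Finset.sum_add_distrib, h]
    ring

lemma Hmul_Hinv_sub (x y : H n) :
    Hmul x (Hinv y) - x = -(y.1, y.2 + 2 * (∑ j, x.1 j * conj (y.1 j)).im) := by
  ext1
  · simp [Hmul, Hinv]
  · simp [Hmul, Hinv]
    ring

lemma Hmul_Hinv_smul (x y : H n) (θ : ℝ) :
    Hmul x (Hinv (θ • y)) = x + θ • (Hmul x (Hinv y) - x) := by
  rw [Hmul_Hinv_sub]
  ext1
  · simp [Hmul, Hinv, sub_eq_add_neg]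
  · simp [Hmul, Hinv, Complex.real_smul, ← Finset.mul_sum, mul_left_comm]
    ring

lemma norm_Hmul_Hinv_sub_le (x y : H n) :
    ‖Hmul x (Hinv y) - x‖ ≤ Hnorm y * (1 + Hnorm y + 2 * Hnorm x) := by
  have hy := Hnorm_nonneg y
  have hx := Hnorm_nonneg x
  rw [Hmul_Hinv_sub, norm_neg, Prod.norm_def]
  refine max_le ?_ ?_
  · nlinarith [norm_fst_le_Hnorm y]
  · calc ‖y.2 + 2 * (∑ j, x.1 j * conj (y.1 j)).im‖
        ≤ |y.2| + 2 * |(∑ j, x.1 j * conj (y.1 j)).im| := by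
          rw [Real.norm_eq_abs]
          refine (abs_add_le _ _).trans_eq ?_
          rw [abs_mul, abs_two]
      _ ≤ Hnorm y ^ 2 + 2 * (Hnorm x * Hnorm y) := by
          gcongr
          · exact abs_snd_le_Hnorm_sq y
          · exact abs_im_sum_mul_conj_le x y
      _ ≤ _ := by nlinarith

lemma Hnorm_smul_le (y : H n) {θ : ℝ} (h0 : 0 ≤ θ) (h1 : θ ≤ 1) : Hnorm (θ • y) ≤ Hnorm y := by
  refine Real.sqrt_le_sqrt (add_le_add (Finset.sum_le_sum fun j _ => ?_) ?_)
  · simp only [Prod.smul_fst, Pi.smul_apply, Complex.real_smul, map_mul, Complex.normSq_ofReal]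
    exact mul_le_of_le_one_left (Complex.normSq_nonneg _) (by nlinarith)
  · rw [Prod.smul_snd, smul_eq_mul, abs_mul, abs_of_nonneg h0]
    exact mul_le_of_le_one_left (abs_nonneg _) h1

lemma exists_eq_Hmul_Hinv_smul_of_mem_segment {x y : H n} {s : ℝ} {p : H n × ℝ}
    (hp : p ∈ segment ℝ (x, s) (Hmul x (Hinv y), s)) :
    ∃ θ ∈ Set.Icc (0 : ℝ) 1, p = (Hmul x (Hinv (θ • y)), s) := by
  rw [segment_eq_image'] at hp
  obtain ⟨θ, hθ, rfl⟩ := hp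
  exact ⟨θ, hθ, by rw [Hmul_Hinv_smul]; simp⟩

lemma one_add_Hnorm_le_of_Hnorm_le {γ : ℝ} (hγ : 1 ≤ γ)
    (hγ' : ∀ x y : H n, Hnorm (Hmul x y) ≤ γ * (Hnorm x + Hnorm y)) {x y : H n}
    (hy : Hnorm y ≤ 1 / (2 * γ) * (1 + Hnorm x)) :
    1 + Hnorm x ≤ 2 * γ * (1 + Hnorm (Hmul x (Hinv y))) := by
  have hx : Hnorm x ≤ γ * (Hnorm (Hmul x (Hinv y)) + Hnorm y) := by
    simpa only [Hmul_Hinv_mul] using hγ' (Hmul x (Hinv y)) y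
  have hγy : γ * Hnorm y ≤ (1 + Hnorm x) / 2 := by
    calc γ * Hnorm y ≤ γ * (1 / (2 * γ) * (1 + Hnorm x)) := by gcongr
      _ = (1 + Hnorm x) / 2 := by field_simp
  nlinarith [Hnorm_nonneg (Hmul x (Hinv y))]

lemma SchwartzMap.exists_one_add_pow_mul_norm_fderiv_le {E F : Type*} [NormedAddCommGroup E]
    [NormedSpace ℝ E] [NormedAddCommGroup F] [NormedSpace ℝ F] (f : 𝓢(E, F)) (k : ℕ) :
    ∃ D, ∀ p, (1 + ‖p‖) ^ k * ‖fderiv ℝ f p‖ ≤ D :=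
  ⟨_, fun p => by
    simpa using f.one_add_le_sup_seminorm_apply (𝕜 := ℝ) (m := (k, 1)) le_rfl le_rfl p⟩

lemma SchwartzMap.exists_one_add_Hnorm_pow_mul_norm_fderiv_le (F : 𝓢(H n × ℝ, ℝ)) (M B : ℕ) :
    ∃ D, ∀ (ξ : H n) (s : ℝ), (1 + Hnorm ξ) ^ M * (1 + |s|) ^ B * ‖fderiv ℝ F (ξ, s)‖ ≤ D := by
  obtain ⟨D, hD⟩ := F.exists_one_add_pow_mul_norm_fderiv_le (M + B)
  refine ⟨(1 + √(n + 1)) ^ M * D, fun ξ s => ?_⟩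
  have := Hnorm_nonneg ξ
  have hξ : 1 + Hnorm ξ ≤ (1 + √(n + 1)) * (1 + ‖(ξ, s)‖) :=
    (one_add_Hnorm_le ξ).trans (by gcongr; exact norm_fst_le (ξ, s))
  have hs : 1 + |s| ≤ 1 + ‖(ξ, s)‖ := by
    gcongr; exact norm_snd_le (ξ, s)
  calc (1 + Hnorm ξ) ^ M * (1 + |s|) ^ B * ‖fderiv ℝ F (ξ, s)‖
      ≤ ((1 + √(n + 1)) * (1 + ‖(ξ, s)‖)) ^ M * (1 + ‖(ξ, s)‖) ^ B * ‖fderiv ℝ F (ξ, s)‖ := by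
        gcongr
    _ = (1 + √(n + 1)) ^ M * ((1 + ‖(ξ, s)‖) ^ (M + B) * ‖fderiv ℝ F (ξ, s)‖) := by
        rw [mul_pow, pow_add]; ring
    _ ≤ (1 + √(n + 1)) ^ M * D := by gcongr; exact hD _

lemma abs_sub_Hmul_Hinv_le (F : 𝓢(H n × ℝ, ℝ)) (M B : ℕ) {γ : ℝ} (hγ : 1 ≤ γ)
    (hγ' : ∀ x y : H n, Hnorm (Hmul x y) ≤ γ * (Hnorm x + Hnorm y)) :
    ∃ K, ∀ (x y : H n) (s : ℝ), Hnorm y ≤ 1 / (2 * γ) * (1 + Hnorm x) →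
      |F (Hmul x (Hinv y), s) - F (x, s)| ≤ K * Hnorm y / ((1 + Hnorm x) ^ M * (1 + |s|) ^ B) := by
  -- one extra power of `1 + |x|` pays for the length of the segment
  obtain ⟨D, hD⟩ := F.exists_one_add_Hnorm_pow_mul_norm_fderiv_le (M + 1) B
  refine ⟨3 * (2 * γ) ^ (M + 1) * D, fun x y s hy => ?_⟩
  have hx := Hnorm_nonneg x
  have hD0 : 0 ≤ D :=
    (by positivity : (0 : ℝ) ≤ (1 + Hnorm x) ^ (M + 1) * (1 + |s|) ^ B * _).trans (hD x s)
  have hy0 := Hnorm_nonneg y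
  have hy1 : Hnorm y ≤ 1 + Hnorm x := by
    refine hy.trans (mul_le_of_le_one_left (by positivity) ?_)
    rw [div_le_one (by positivity)]
    linarith
  set A := (1 + Hnorm x) ^ (M + 1) * (1 + |s|) ^ B with hA
  have hApos : 0 < A := by positivity
  have hderiv : ∀ p ∈ segment ℝ (x, s) (Hmul x (Hinv y), s),
      ‖fderiv ℝ F p‖ ≤ (2 * γ) ^ (M + 1) * D / A := by
    intro p hp
    obtain ⟨θ, ⟨h0, h1⟩, rfl⟩ := exists_eq_Hmul_Hinv_smul_of_mem_segment hp
    have hξ := one_add_Hnorm_le_of_Hnorm_le hγ hγ' ((Hnorm_smul_le y h0 h1).trans hy)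
    rw [le_div_iff₀ hApos]
    calc ‖fderiv ℝ F (Hmul x (Hinv (θ • y)), s)‖ * A
        ≤ ‖fderiv ℝ F (Hmul x (Hinv (θ • y)), s)‖ *
          ((2 * γ * (1 + Hnorm (Hmul x (Hinv (θ • y))))) ^ (M + 1) * (1 + |s|) ^ B) := by
          rw [hA]; gcongr
      _ = (2 * γ) ^ (M + 1) * ((1 + Hnorm (Hmul x (Hinv (θ • y)))) ^ (M + 1) * (1 + |s|) ^ B *
          ‖fderiv ℝ F (Hmul x (Hinv (θ • y)), s)‖) := by rw [mul_pow]; ring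
      _ ≤ (2 * γ) ^ (M + 1) * D := by gcongr; exact hD _ _
  have hmvt := (convex_segment _ _).norm_image_sub_le_of_norm_fderiv_le
    (fun p _ => F.differentiableAt) hderiv (left_mem_segment ℝ _ _) (right_mem_segment ℝ _ _)
  have hdist : ‖((Hmul x (Hinv y), s) : H n × ℝ) - (x, s)‖ ≤ 3 * Hnorm y * (1 + Hnorm x) := by
    rw [Prod.mk_sub_mk, sub_self, Prod.norm_def, norm_zero, max_eq_left (norm_nonneg _)]
    nlinarith [norm_Hmul_Hinv_sub_le x y]
  rw [← Real.norm_eq_abs]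
  calc _ ≤ (2 * γ) ^ (M + 1) * D / A * (3 * Hnorm y * (1 + Hnorm x)) :=
        hmvt.trans (by gcongr)
    _ = _ := by rw [hA]; field_simp; ring

end

theorem statement5_general (n : ℕ) (F : SchwartzMap (H n × ℝ) ℝ) (L : ℕ)
    (γ : ℝ) (hγ : 1 < γ)
    (hγ' : ∀ x y : H n, Hnorm (Hmul x y) ≤ γ * (Hnorm x + Hnorm y)) :
    ∃ C > 0, ∀ (x x' : H n) (r r' : ℝ),
      Hnorm x' ≤ 1 / (2 * γ) * (1 + Hnorm x) → |r'| ≥ 1 / 2 * (1 + |r|) →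
      |F (Hmul x (Hinv x'), r - r') - F (x, r - r') - F (Hmul x (Hinv x'), r) + F (x, r)|
        ≤ C * Hnorm x' / (1 + Hnorm x) ^ (L + 2 * n + 2) *
          (1 / (1 + |r - r'|) ^ (L + 1) + 1 / (1 + |r|) ^ (L + 1)) := by
  obtain ⟨K, hK⟩ := abs_sub_Hmul_Hinv_le F (L + 2 * n + 2) (L + 1) hγ.le hγ'
  refine ⟨max K 1, by positivity, fun x x' r r' hx' _ => ?_⟩
  have := Hnorm_nonneg x
  have := Hnorm_nonneg x'
  calc _ = |(F (Hmul x (Hinv x'), r - r') - F (x, r - r')) -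
          (F (Hmul x (Hinv x'), r) - F (x, r))| := by
        congr 1; ring
    _ ≤ |F (Hmul x (Hinv x'), r - r') - F (x, r - r')| + |F (Hmul x (Hinv x'), r) - F (x, r)| :=
        abs_sub _ _
    _ ≤ K * Hnorm x' / ((1 + Hnorm x) ^ (L + 2 * n + 2) * (1 + |r - r'|) ^ (L + 1)) +
          K * Hnorm x' / ((1 + Hnorm x) ^ (L + 2 * n + 2) * (1 + |r|) ^ (L + 1)) :=
        add_le_add (hK x x' (r - r') hx') (hK x x' r hx')
    _ = K * Hnorm x' / (1 + Hnorm x) ^ (L + 2 * n + 2) *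
          (1 / (1 + |r - r'|) ^ (L + 1) + 1 / (1 + |r|) ^ (L + 1)) := by
        simp only [div_eq_mul_inv, mul_inv]; ring
    _ ≤ _ := by gcongr; exact le_max_left _ _

/-- double-difference estimate, regime |(z',u')| small, |r'| large. -/
theorem statement5 (n : ℕ) (F : SchwartzMap (H n × ℝ) ℝ) (L : ℕ) (hL : 0 < L)
    (γ : ℝ) (hγ : 1 < γ)
    (hγ' : ∀ x y : H n, Hnorm (Hmul x y) ≤ γ * (Hnorm x + Hnorm y)) :
    ∃ C > 0, ∀ (x x' : H n) (r r' : ℝ),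
      Hnorm x' ≤ 1 / (2 * γ) * (1 + Hnorm x) → |r'| ≥ 1 / 2 * (1 + |r|) →
      |F (Hmul x (Hinv x'), r - r') - F (x, r - r') - F (Hmul x (Hinv x'), r) + F (x, r)|
        ≤ C * Hnorm x' / (1 + Hnorm x) ^ (L + 2 * n + 2) *
          (1 / (1 + |r - r'|) ^ (L + 1) + 1 / (1 + |r|) ^ (L + 1)) :=
  statement5_general n F L γ hγ hγ'
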